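/- Let r ≥ 5. Then F_v(2_r; r) ≤ r + 5: the graph K_{r−5} + C_5 + C_5 (join of a complete graph on r−5 vertices with two 5-cycles) has r+5 vertices, chromatic number r+1, and clique number r−1. -/

import Mathlib

/-- The join `G₁ + G₂` of two graphs on disjoint vertex sets: all edges of `G₁`
and `G₂` together with all edges between the two vertex sets. -/
def graphJoin {V₁ V₂ : Type*} (G₁ : SimpleGraph V₁) (G₂ : SimpleGraph V₂) :
    SimpleGraph (V₁ ⊕ V₂) where
  Adj a b := match a, b with
    | .inl x, .inl y => G₁.Adj x y
    | .inr x, .inr y => G₂.Adj x y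
    | _, _ => True
  symm := by constructor; rintro (x|x) (y|y) h <;> simp_all <;> exact h.symm
  loopless := by constructor; rintro (x|x) h <;> simp_all

/-- The chromatic number of `G` as a natural number. -/
noncomputable def chi {V : Type*} (G : SimpleGraph V) : ℕ := G.chromaticNumber.toNat

/-- The vertex Folkman number `F_v(2_r; q)`. -/
noncomputable def Fv (r q : ℕ) : ℕ :=
  sInf {n | ∃ G : SimpleGraph (Fin n), G.cliqueNum < q ∧ r + 1 ≤ chi G}

/-- The graph `K_{r-5} + C₅ + C₅`. -/
def Pgraph (r : ℕ) : SimpleGraph ((Fin (r - 5) ⊕ Fin 5) ⊕ Fin 5) :=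
  graphJoin (graphJoin (SimpleGraph.completeGraph (Fin (r - 5))) (SimpleGraph.cycleGraph 5))
    (SimpleGraph.cycleGraph 5)

/-!
The chromatic number and the clique number are both additive under joins, since a coloring
(resp. a clique) of `G + H` is exactly a coloring (resp. a clique) of `G` beside one of `H`,
with no colors shared. With `χ(K_{r-5}) = ω(K_{r-5}) = r - 5`, `χ(C₅) = 3` and `ω(C₅) = 2`,
the graph `K_{r-5} + C₅ + C₅` has `χ = r + 1` and `ω = r - 1 < r` on `r + 5` vertices.
-/

open SimpleGraph Finset

namespace SimpleGraph

variable {α β : Type*} {G : SimpleGraph α} {H : SimpleGraph β} {n : ℕ}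

lemma cliqueNum_le_of_forall_isClique (h : ∀ s : Finset α, G.IsClique s → #s ≤ n) :
    G.cliqueNum ≤ n := by
  obtain ⟨s, hs⟩ := G.exists_isNClique_cliqueNum
  exact hs.card_eq ▸ h s hs.isClique

lemma CliqueFree.cliqueNum_lt (h : G.CliqueFree n) : G.cliqueNum < n := by
  obtain ⟨s, hs⟩ := G.exists_isNClique_cliqueNum
  by_contra! hn
  exact hs.not_cliqueFree (h.mono hn)

lemma Embedding.cliqueNum_le [Finite β] (f : G ↪g H) : G.cliqueNum ≤ H.cliqueNum := by
  obtain ⟨s, hs⟩ := G.exists_isNClique_cliqueNum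
  have hmap : H.IsClique (s.map f.toEmbedding) :=
    (hs.isClique.finsetMap (f := f.toEmbedding)).mono
      ((map_le_iff_le_comap _ _ _).2 fun _ _ h ↦ f.map_rel_iff.2 h)
  simpa [hs.card_eq] using IsClique.card_le_cliqueNum (tc := hmap)

lemma cliqueNum_top [Fintype α] : (⊤ : SimpleGraph α).cliqueNum = Fintype.card α :=
  le_antisymm (cliqueNum_le_of_forall_isClique fun s _ ↦ card_le_univ s)
    (by simpa using IsClique.card_le_cliqueNum (tc := IsClique.top ((univ : Finset α) : Set α)))

lemma cycleGraph_five_cliqueFree_three : (cycleGraph 5).CliqueFree 3 := by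
  have h : ∀ s : Finset (Fin 5), ¬(cycleGraph 5).IsNClique 3 s := by decide
  exact h

lemma cliqueNum_cycleGraph_five : (cycleGraph 5).cliqueNum = 2 := by
  refine le_antisymm (Nat.le_of_lt_succ cycleGraph_five_cliqueFree_three.cliqueNum_lt) ?_
  have h01 : (cycleGraph 5).IsClique ({0, 1} : Finset (Fin 5)) := by decide
  simpa using IsClique.card_le_cliqueNum (tc := h01)

end SimpleGraph

section GraphJoin

variable {α β γ δ : Type*} {G : SimpleGraph α} {H : SimpleGraph β}

@[simp]
lemma graphJoin_adj_inl_inl {x y : α} : (graphJoin G H).Adj (.inl x) (.inl y) ↔ G.Adj x y :=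
  Iff.rfl

@[simp]
lemma graphJoin_adj_inr_inr {x y : β} : (graphJoin G H).Adj (.inr x) (.inr y) ↔ H.Adj x y :=
  Iff.rfl

@[simp]
lemma graphJoin_adj_inl_inr (x : α) (y : β) : (graphJoin G H).Adj (.inl x) (.inr y) :=
  trivial

@[simp]
lemma graphJoin_adj_inr_inl (x : β) (y : α) : (graphJoin G H).Adj (.inr x) (.inl y) :=
  trivial

def SimpleGraph.Coloring.join (cG : G.Coloring γ) (cH : H.Coloring δ) :
    (graphJoin G H).Coloring (γ ⊕ δ) :=
  Coloring.mk (Sum.map cG cH) <| by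
    rintro (x | x) (y | y) h
    · simpa using cG.valid h
    · simp
    · simp
    · simpa using cH.valid h

lemma SimpleGraph.Colorable.join {m n : ℕ} (hG : G.Colorable m) (hH : H.Colorable n) :
    (graphJoin G H).Colorable (m + n) := by
  obtain ⟨cG⟩ := hG
  obtain ⟨cH⟩ := hH
  simpa using (cG.join cH).colorable

lemma SimpleGraph.Colorable.exists_add_le_of_join {n : ℕ} (h : (graphJoin G H).Colorable n) :
    ∃ a b, a + b ≤ n ∧ G.Colorable a ∧ H.Colorable b := by
  classical
  obtain ⟨c⟩ := h
  let A : Finset (Fin n) := {i | ∃ x, c (.inl x) = i}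
  let B : Finset (Fin n) := {i | ∃ y, c (.inr y) = i}
  have hAB : Disjoint A B := by
    refine Finset.disjoint_left.2 ?_
    simp only [A, B, mem_filter, mem_univ, true_and]
    rintro _ ⟨x, rfl⟩ ⟨y, hy⟩
    exact c.valid (graphJoin_adj_inl_inr x y) hy.symm
  refine ⟨#A, #B, ?_, ?_, ?_⟩
  · simpa [card_union_of_disjoint hAB] using card_le_univ (A ∪ B)
  · simpa using (Coloring.mk (fun x ↦ (⟨c (.inl x), by simp [A]⟩ : A))
      fun h he ↦ c.valid (graphJoin_adj_inl_inl.2 h) (congrArg Subtype.val he)).colorable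
  · simpa using (Coloring.mk (fun y ↦ (⟨c (.inr y), by simp [B]⟩ : B))
      fun h he ↦ c.valid (graphJoin_adj_inr_inr.2 h) (congrArg Subtype.val he)).colorable

theorem chromaticNumber_graphJoin [Finite α] [Finite β] :
    (graphJoin G H).chromaticNumber = G.chromaticNumber + H.chromaticNumber := by
  apply le_antisymm
  · have hG := G.colorable_chromaticNumber_of_fintype
    have hH := H.colorable_chromaticNumber_of_fintype
    have := (hG.join hH).chromaticNumber_le
    rwa [Nat.cast_add, ENat.natCast_toNat (chromaticNumber_ne_top_iff_exists.2 ⟨_, hG⟩),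
      ENat.natCast_toNat (chromaticNumber_ne_top_iff_exists.2 ⟨_, hH⟩)] at this
  · obtain ⟨a, b, hab, ha, hb⟩ :=
      (graphJoin G H).colorable_chromaticNumber_of_fintype.exists_add_le_of_join
    calc G.chromaticNumber + H.chromaticNumber ≤ a + b :=
          add_le_add ha.chromaticNumber_le hb.chromaticNumber_le
      _ ≤ (graphJoin G H).chromaticNumber.toNat := mod_cast hab
      _ ≤ (graphJoin G H).chromaticNumber := ENat.natCast_toNat_le_self _

theorem cliqueNum_graphJoin [Finite α] [Finite β] :
    (graphJoin G H).cliqueNum = G.cliqueNum + H.cliqueNum := by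
  apply le_antisymm
  · refine cliqueNum_le_of_forall_isClique fun s hs ↦ ?_
    have hG : G.IsClique s.toLeft := fun x hx y hy hne ↦
      graphJoin_adj_inl_inl.1 (hs (by simpa using hx) (by simpa using hy) (by simpa using hne))
    have hH : H.IsClique s.toRight := fun x hx y hy hne ↦
      graphJoin_adj_inr_inr.1 (hs (by simpa using hx) (by simpa using hy) (by simpa using hne))
    rw [← card_toLeft_add_card_toRight]
    exact add_le_add (IsClique.card_le_cliqueNum (tc := hG))
      (IsClique.card_le_cliqueNum (tc := hH))
  · obtain ⟨s, hs⟩ := G.exists_isNClique_cliqueNum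
    obtain ⟨t, ht⟩ := H.exists_isNClique_cliqueNum
    have hst : (graphJoin G H).IsClique (s.disjSum t) := by
      rintro (x | x) hx (y | y) hy hne
      · exact hs.isClique (by simpa using hx) (by simpa using hy) (by simpa using hne)
      · simp
      · simp
      · exact ht.isClique (by simpa using hx) (by simpa using hy) (by simpa using hne)
    simpa [hs.card_eq, ht.card_eq] using IsClique.card_le_cliqueNum (tc := hst)

end GraphJoin

theorem chromaticNumber_Pgraph {r : ℕ} (hr : 5 ≤ r) : (Pgraph r).chromaticNumber = r + 1 := by
  rw [Pgraph, chromaticNumber_graphJoin, chromaticNumber_graphJoin, completeGraph_eq_top,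
    chromaticNumber_top, chromaticNumber_cycleGraph_of_odd 5 (by norm_num) (by decide),
    Fintype.card_fin]
  norm_cast
  omega

theorem cliqueNum_Pgraph {r : ℕ} (hr : 5 ≤ r) : (Pgraph r).cliqueNum = r - 1 := by
  rw [Pgraph, cliqueNum_graphJoin, cliqueNum_graphJoin, completeGraph_eq_top, cliqueNum_top,
    cliqueNum_cycleGraph_five, Fintype.card_fin]
  omega

theorem Fv_le_card {V : Type*} [Fintype V] (G : SimpleGraph V) {r q : ℕ} (hq : G.cliqueNum < q)
    (hr : r + 1 ≤ chi G) : Fv r q ≤ Fintype.card V := by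
  let e := G.overFinIso rfl
  refine Nat.sInf_le ⟨G.overFin rfl, e.symm.toEmbedding.cliqueNum_le.trans_lt hq, ?_⟩
  rwa [chi, ← chromaticNumber_congr e]

theorem stmt18 (r : ℕ) (hr : 5 ≤ r) :
    Fintype.card ((Fin (r - 5) ⊕ Fin 5) ⊕ Fin 5) = r + 5 ∧
    chi (Pgraph r) = r + 1 ∧ (Pgraph r).cliqueNum = r - 1 ∧
    Fv r r ≤ r + 5 := by
  have hcard : Fintype.card ((Fin (r - 5) ⊕ Fin 5) ⊕ Fin 5) = r + 5 := by
    simp only [Fintype.card_sum, Fintype.card_fin]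
    omega
  have hchi : chi (Pgraph r) = r + 1 := by
    rw [chi, chromaticNumber_Pgraph hr]
    rfl
  have hclique := cliqueNum_Pgraph hr
  exact ⟨hcard, hchi, hclique, hcard ▸ Fv_le_card (Pgraph r) (by omega) hchi.ge⟩
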